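/- arXiv:math/0107176 — 2 statements merged into one kernel-verified Lean document; each statement's English description precedes it below -/
import Mathlib

section
/- Let ⟨·,·⟩ be a Hopf pairing between Hopf algebras A and B over a field k, and let D(A, B) be the double. Let g ∈ A and h ∈ B be grouplike, let a ∈ A satisfy Δ_A(a) = a ⊗ 1 + g ⊗ a, and let b ∈ B satisfy Δ_B(b) = 1 ⊗ b + b ⊗ h. Assume ⟨a, h⟩ = 0 and ⟨g, S_B(b)⟩ = 0. Then in D(A, B): (1 ⊗ b)·(a ⊗ 1) = a ⊗ b + ⟨a, S_B(b)⟩ (1 ⊗ h) + ⟨a, b⟩ (g ⊗ 1). -/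
/-!
Expanding the iterated coproducts, `(Δ ⊗ id) Δ b = 1 ⊗ 1 ⊗ b + 1 ⊗ b ⊗ h + b ⊗ h ⊗ h` and
`(Δ ⊗ id) Δ a = a ⊗ 1 ⊗ 1 + g ⊗ a ⊗ 1 + g ⊗ g ⊗ a`, the product `(1 ⊗ b)·(a ⊗ 1)` is a sum of
nine terms. All but three vanish, because `ε a = ε b = 0` (apply `ε ⊗ id` to the
skew-primitivity relations), `⟨a, h⟩ = 0` and `⟨g, S b⟩ = 0`.
-/

open TensorProduct HopfAlgebra

variable {k A B : Type*} [Field k] [Ring A] [Ring B] [HopfAlgebra k A] [HopfAlgebra k B]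

/-- A Hopf pairing between Hopf algebras `A` and `B` over `k`, whose antipodes are
bijective with given inverses `SAinv` and `SBinv`.  The Sweedler sums
`⟨a, bb'⟩ = Σ ⟨a₍₁₎, b⟩⟨a₍₂₎, b'⟩` and `⟨aa', b⟩ = Σ ⟨a, b₍₂₎⟩⟨a', b₍₁₎⟩`
are expressed using (arbitrary) finite representations of the comultiplications. -/
structure IsHopfPairing (p : A →ₗ[k] B →ₗ[k] k) (SAinv : A →ₗ[k] A) (SBinv : B →ₗ[k] B) :
    Prop where
  SAinv_antipode : ∀ a : A, SAinv (antipode (R := k) a) = a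
  antipode_SAinv : ∀ a : A, antipode (R := k) (SAinv a) = a
  SBinv_antipode : ∀ b : B, SBinv (antipode (R := k) b) = b
  antipode_SBinv : ∀ b : B, antipode (R := k) (SBinv b) = b
  pair_mul_right : ∀ (a : A) (b b' : B) {ι : Type*} (r : Coalgebra.Repr k a ι),
    p a (b * b') = ∑ i ∈ r.index, p (r.left i) b * p (r.right i) b'
  pair_mul_left : ∀ (a a' : A) (b : B) {ι : Type*} (r : Coalgebra.Repr k b ι),
    p (a * a') b = ∑ i ∈ r.index, p a (r.right i) * p a' (r.left i)
  pair_one_right : ∀ a : A, p a 1 = Coalgebra.counit (R := k) a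
  pair_one_left : ∀ b : B, p 1 b = Coalgebra.counit (R := k) b
  pair_antipode : ∀ (a : A) (b : B), p (antipode (R := k) a) b = p a (SBinv b)

variable (k) in
/-- `m` is the multiplication of the double `D(A, B)` associated to the pairing `p`:
`(a ⊗ b)·(a' ⊗ b') = Σ ⟨a'₍₁₎, S_B(b₍₁₎)⟩ ⟨a'₍₃₎, b₍₃₎⟩ (a a'₍₂₎) ⊗ (b₍₂₎ b')`,
where the Sweedler sums over `(Δ_A ⊗ id)Δ_A(a')` and `(Δ_B ⊗ id)Δ_B(b)` are
expressed via (arbitrary) iterated finite representations of the comultiplications. -/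
def IsDoubleMul (p : A →ₗ[k] B →ₗ[k] k)
    (m : A ⊗[k] B →ₗ[k] A ⊗[k] B →ₗ[k] A ⊗[k] B) : Prop :=
  ∀ (a a' : A) (b b' : B)
    (ιa : Type) (ra : Coalgebra.Repr k a' ιa) (κa : ιa → Type)
    (ra2 : (i' : ιa) → Coalgebra.Repr k (ra.left i') (κa i'))
    (ιb : Type) (rb : Coalgebra.Repr k b ιb) (κb : ιb → Type)
    (rb2 : (i : ιb) → Coalgebra.Repr k (rb.left i) (κb i)),
    m (a ⊗ₜ b) (a' ⊗ₜ b') =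
      ∑ i ∈ rb.index, ∑ j ∈ (rb2 i).index, ∑ i' ∈ ra.index, ∑ j' ∈ (ra2 i').index,
        (p ((ra2 i').left j') (antipode (R := k) ((rb2 i).left j)) *
            p (ra.right i') (rb.right i)) •
          ((a * (ra2 i').right j') ⊗ₜ[k] ((rb2 i).right j * b'))

namespace Coalgebra

section Repr

variable {R M : Type*} [CommSemiring R] [AddCommMonoid M] [Module R M] [CoalgebraStruct R M]

def Repr.ofEqTmul {x l r : M} (h : comul (R := R) x = l ⊗ₜ r) : Repr R x (Fin 1) where
  index := Finset.univ
  left := ![l]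
  right := ![r]
  eq := by simp [h]

def Repr.ofEqAdd {x l r l' r' : M} (h : comul (R := R) x = l ⊗ₜ r + l' ⊗ₜ r') :
    Repr R x (Fin 2) where
  index := Finset.univ
  left := ![l, l']
  right := ![r, r']
  eq := by simp [Fin.sum_univ_two, h]

def Repr.cons₂ {x y : M} {ι κ : Type} (r : Repr R x ι) (s : Repr R y κ) :
    (i : Fin 2) → Repr R (![x, y] i) (![ι, κ] i) :=
  Fin.cases r (Fin.cases s finZeroElim)

@[simp] theorem Repr.cons₂_zero {x y : M} {ι κ : Type} (r : Repr R x ι) (s : Repr R y κ) :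
    Repr.cons₂ r s 0 = r := rfl

@[simp] theorem Repr.cons₂_one {x y : M} {ι κ : Type} (r : Repr R x ι) (s : Repr R y κ) :
    Repr.cons₂ r s 1 = s := rfl

end Repr

theorem counit_eq_zero_of_comul_eq {R M : Type*} [CommSemiring R] [AddCommGroup M] [Module R M]
    [Coalgebra R M] {x u v : M} (hx : comul (R := R) x = x ⊗ₜ u + v ⊗ₜ x)
    (hu : counit (R := R) u = 1) (hv : counit (R := R) v = 1) : counit (R := R) x = 0 := by
  have hsum := sum_counit_smul (Repr.ofEqAdd hx)
  simp only [Repr.ofEqAdd, Fin.sum_univ_two, Matrix.cons_val_zero, Matrix.cons_val_one,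
    Matrix.cons_val_fin_one, hv, one_smul, add_eq_right] at hsum
  simpa [hu] using congr(counit (R := R) $hsum)

end Coalgebra

open Coalgebra

theorem double_skewPrimitive_commutator_general
    (p : A →ₗ[k] B →ₗ[k] k) (SAinv : A →ₗ[k] A) (SBinv : B →ₗ[k] B)
    (hp : IsHopfPairing p SAinv SBinv)
    (m : A ⊗[k] B →ₗ[k] A ⊗[k] B →ₗ[k] A ⊗[k] B) (hm : IsDoubleMul k p m)
    (g : A) (hg : Coalgebra.comul (R := k) g = g ⊗ₜ[k] g)
    (hg1 : Coalgebra.counit (R := k) g = 1)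
    (h : B)
    (hh1 : Coalgebra.counit (R := k) h = 1)
    (a : A) (ha : Coalgebra.comul (R := k) a = a ⊗ₜ[k] (1 : A) + g ⊗ₜ[k] a)
    (b : B) (hb : Coalgebra.comul (R := k) b = (1 : B) ⊗ₜ[k] b + b ⊗ₜ[k] h)
    (hah : p a h = 0) (hgb : p g (antipode (R := k) b) = 0) :
    m ((1 : A) ⊗ₜ[k] b) (a ⊗ₜ[k] (1 : B)) =
      a ⊗ₜ[k] b + p a (antipode (R := k) b) • ((1 : A) ⊗ₜ[k] h) +
        p a b • (g ⊗ₜ[k] (1 : B)) := by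
  have hεa : counit (R := k) a = 0 := counit_eq_zero_of_comul_eq ha Bialgebra.counit_one hg1
  have hεb : counit (R := k) b = 0 :=
    counit_eq_zero_of_comul_eq (hb.trans (add_comm _ _)) hh1 Bialgebra.counit_one
  have hcomul_one : comul (R := k) (1 : B) = 1 ⊗ₜ 1 := by simp [Algebra.TensorProduct.one_def]
  let ra := Repr.ofEqAdd ha
  let rb := Repr.ofEqAdd hb
  rw [hm 1 a b 1 _ ra _ (ra.cons₂ (.ofEqTmul hg)) _ rb _ ((Repr.ofEqTmul hcomul_one).cons₂ rb)]
  simp only [ra, rb, Repr.ofEqAdd, Repr.ofEqTmul, Finset.univ_unique, Fin.default_eq_zero,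
    Fin.sum_univ_two, Finset.sum_singleton, Matrix.cons_val_zero, Matrix.cons_val_one,
    Matrix.cons_val_fin_one, Repr.cons₂_zero, Repr.cons₂_one, antipode_one, hp.pair_one_left,
    hp.pair_one_right, hεa, hεb, hg1, hh1, hah, hgb, one_mul, mul_one, mul_zero, zero_smul,
    one_smul, add_zero, zero_add]
  abel

/-- The abstract form of the relation between the currents `x⁺` and `x⁻` producing the
Cartan currents: for grouplike `g ∈ A`, `h ∈ B`, a skew-primitive `a ∈ A` with
`Δ_A(a) = a ⊗ 1 + g ⊗ a`, and a skew-primitive `b ∈ B` with `Δ_B(b) = 1 ⊗ b + b ⊗ h`,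
assuming `⟨a, h⟩ = 0` and `⟨g, S_B(b)⟩ = 0`, one has in the double `D(A, B)`:
`(1 ⊗ b)·(a ⊗ 1) = a ⊗ b + ⟨a, S_B(b)⟩ (1 ⊗ h) + ⟨a, b⟩ (g ⊗ 1)`. -/
theorem double_skewPrimitive_commutator
    (p : A →ₗ[k] B →ₗ[k] k) (SAinv : A →ₗ[k] A) (SBinv : B →ₗ[k] B)
    (hp : IsHopfPairing p SAinv SBinv)
    (m : A ⊗[k] B →ₗ[k] A ⊗[k] B →ₗ[k] A ⊗[k] B) (hm : IsDoubleMul k p m)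
    (g : A) (hg : Coalgebra.comul (R := k) g = g ⊗ₜ[k] g)
    (hg1 : Coalgebra.counit (R := k) g = 1)
    (h : B) (hh : Coalgebra.comul (R := k) h = h ⊗ₜ[k] h)
    (hh1 : Coalgebra.counit (R := k) h = 1)
    (a : A) (ha : Coalgebra.comul (R := k) a = a ⊗ₜ[k] (1 : A) + g ⊗ₜ[k] a)
    (b : B) (hb : Coalgebra.comul (R := k) b = (1 : B) ⊗ₜ[k] b + b ⊗ₜ[k] h)
    (hah : p a h = 0) (hgb : p g (antipode (R := k) b) = 0) :
    m ((1 : A) ⊗ₜ[k] b) (a ⊗ₜ[k] (1 : B)) =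
      a ⊗ₜ[k] b + p a (antipode (R := k) b) • ((1 : A) ⊗ₜ[k] h) +
        p a b • (g ⊗ₜ[k] (1 : B)) :=
  double_skewPrimitive_commutator_general p SAinv SBinv hp m hm g hg hg1 h hh1 a ha b hb hah hgb
end

section
/- Let k be a field, M a k-vector space, and (F_N)_{N ∈ ℕ} a decreasing sequence of subspaces of M with ⋂_{N} F_N = {0}. Let a, b ∈ k be nonzero and let c : ℤ × ℤ → M satisfy a·c(n+1, m) = b·c(n, m+1) for all n, m ∈ ℤ. Assume that for all n, m ∈ ℤ and every N ∈ ℕ there exists K such that c(n+k, m−k) ∈ F_N for all k ≥ K. Then c(n, m) = 0 for all n, m ∈ ℤ. -/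
/-- Lemma 1 of the paper, in filtration form: if `(F_N)` is a decreasing, separated
filtration of `M` and `c : ℤ × ℤ → M` satisfies `a·c(n+1, m) = b·c(n, m+1)` with
`a, b ≠ 0`, and the antidiagonal tails `c(n+k, m−k)` eventually lie in every `F_N`,
then `c` vanishes identically. -/
theorem antidiagonal_filtration_vanishing {𝕜 M : Type*} [Field 𝕜]
    [AddCommGroup M] [Module 𝕜 M]
    (F : ℕ → Submodule 𝕜 M) (hF : Antitone F) (hsep : (⨅ N : ℕ, F N) = ⊥)
    (a b : 𝕜) (ha : a ≠ 0) (hb : b ≠ 0)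
    (c : ℤ × ℤ → M)
    (hrec : ∀ n m : ℤ, a • c (n + 1, m) = b • c (n, m + 1))
    (hdeg : ∀ (n m : ℤ) (N : ℕ), ∃ K : ℕ, ∀ j : ℕ, K ≤ j → c (n + j, m - j) ∈ F N) :
    ∀ n m : ℤ, c (n, m) = 0 := by
  intro n m
  have slide : ∀ j : ℕ, c (n, m) = (a / b) ^ j • c (n + j, m - j) := by
    intro j
    induction j with
    | zero => simp
    | succ j ih =>
      have h := hrec (n + j) (m - j - 1)
      have hstep : c (n + j, m - j) = (a / b) • c (n + j + 1, m - j - 1) := by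
        have : (m - j - 1 : ℤ) + 1 = m - j := by ring
        rw [this] at h
        rw [← inv_smul_smul₀ hb (c (n + j, m - j)), ← h, smul_smul]
        rw [div_eq_mul_inv, mul_comm]
      rw [ih, hstep, smul_smul, ← pow_succ]
      push_cast
      ring_nf
  have mem : ∀ N : ℕ, c (n, m) ∈ F N := by
    intro N
    obtain ⟨K, hK⟩ := hdeg n m N
    rw [slide K]
    exact Submodule.smul_mem _ _ (hK K le_rfl)
  have : c (n, m) ∈ (⨅ N : ℕ, F N) := Submodule.mem_iInf _ |>.mpr mem
  rwa [hsep, Submodule.mem_bot] at this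
end
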